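/- Fix an integer N ≥ 1, a real number h > 0, real numbers τ, N₁, α, β, χ > 0 and ρ > 1. Then each of the four functionals F_S, F_H, F_{K₁}, F_{K₂} (defined below) on periodic grid functions is convex on the convex set {φ : ∀(i,j), 0 < φ(i,j) < 1/ρ}. -/

import Mathlib

/-- Forward difference in the x-direction. -/
noncomputable def Dx {N : ℕ} (h : ℝ) (ν : ZMod N × ZMod N → ℝ) : ZMod N × ZMod N → ℝ :=
  fun p => (ν (p.1 + 1, p.2) - ν p) / h

/-- Forward difference in the y-direction. -/
noncomputable def Dy {N : ℕ} (h : ℝ) (ν : ZMod N × ZMod N → ℝ) : ZMod N × ZMod N → ℝ :=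
  fun p => (ν (p.1, p.2 + 1) - ν p) / h

/-- The logarithmic Flory--Huggins part of the energy density. -/
noncomputable def Sfun (τ N₁ α β ρ : ℝ) (s : ℝ) : ℝ :=
  s / τ * Real.log (α * s / τ) + s / N₁ * Real.log (β * s / τ)
    + (1 - ρ * s) * Real.log (1 - ρ * s)

/-- The concave part of the energy density. -/
noncomputable def Hfun (χ ρ : ℝ) (s : ℝ) : ℝ := χ * s * (1 - ρ * s)

/-- The deGennes diffusive coefficient. -/
noncomputable def kap (s : ℝ) : ℝ := 1 / (36 * s * (1 - s))

/-! Each functional is a nonnegative multiple of a sum over grid points of convex functions of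
finitely many linear functionals of `φ`. For `F_S` these are `x log (c x)` and
`(1 - ρ x) log (1 - ρ x)`, and `-H` is a quadratic with positive leading coefficient `χ ρ`.
The only delicate term is `(κ(x) - 1/36) u²` in `F_{K₁}`: it equals `u² / c(x)` with
`c(x) = 36 x (1 - x) / (1 - x + x²)`, which is positive and concave on `(0, 1)`, and the
perspective-type map `(x, u) ↦ u² / c(x)` of a positive concave `c` is jointly convex. -/

open Real Set

theorem convexOn_finset_sum {ι E : Type*} [AddCommGroup E] [Module ℝ E] {s : Set E}
    (t : Finset ι) {f : ι → E → ℝ} (hf : ∀ i ∈ t, ConvexOn ℝ s (f i)) (hs : Convex ℝ s) :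
    ConvexOn ℝ s fun x => ∑ i ∈ t, f i x := by
  refine ⟨hs, fun x hx y hy a b ha hb hab => ?_⟩
  calc ∑ i ∈ t, f i (a • x + b • y) ≤ ∑ i ∈ t, (a • f i x + b • f i y) :=
        Finset.sum_le_sum fun i hi => (hf i hi).2 hx hy ha hb hab
    _ = a • ∑ i ∈ t, f i x + b • ∑ i ∈ t, f i y := by
        rw [Finset.sum_add_distrib, Finset.smul_sum, Finset.smul_sum]

section Grid

variable {ι : Type*} {s : Set ℝ}

theorem convex_setOf_forall_apply_mem (hs : Convex ℝ s) : Convex ℝ {φ : ι → ℝ | ∀ i, φ i ∈ s} :=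
  fun _ hφ _ hψ _ _ ha hb hab i => hs (hφ i) (hψ i) ha hb hab

theorem ConvexOn.sum_comp_apply [Fintype ι] {f : ℝ → ℝ} (hf : ConvexOn ℝ s f) :
    ConvexOn ℝ {φ : ι → ℝ | ∀ i, φ i ∈ s} fun φ => ∑ i, f (φ i) :=
  convexOn_finset_sum _
    (fun i _ => (hf.comp_linearMap (LinearMap.proj i)).subset (fun _ hφ => by exact hφ i)
      (convex_setOf_forall_apply_mem hf.1))
    (convex_setOf_forall_apply_mem hf.1)

theorem ConvexOn.comp_apply_prod {g : ℝ × ℝ → ℝ} (hg : ConvexOn ℝ (s ×ˢ univ) g) (hs : Convex ℝ s)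
    (i : ι) (ℓ : (ι → ℝ) →ₗ[ℝ] ℝ) :
    ConvexOn ℝ {φ : ι → ℝ | ∀ i, φ i ∈ s} fun φ => g (φ i, ℓ φ) :=
  (hg.comp_linearMap ((LinearMap.proj i).prod ℓ)).subset (fun (_ : ι → ℝ) hφ => ⟨hφ i, trivial⟩)
    (convex_setOf_forall_apply_mem hs)

end Grid

theorem convexOn_mul_log_const_mul (c : ℝ) : ConvexOn ℝ (Ici 0) fun x => x * log (c * x) := by
  rcases eq_or_ne c 0 with rfl | hc
  · simpa using convexOn_const (0 : ℝ) (convex_Ici (0 : ℝ))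
  refine (convexOn_mul_log.add ((LinearMap.mulLeft ℝ (log c)).convexOn (convex_Ici 0))).congr
    fun x _ => ?_
  rcases eq_or_ne x 0 with rfl | hx
  · simp
  · simp [log_mul hc hx]
    ring

theorem convexOn_Sfun {τ N₁ : ℝ} (hτ : 0 ≤ τ) (hN₁ : 0 ≤ N₁) (α β ρ : ℝ) :
    ConvexOn ℝ {s | 0 ≤ s ∧ ρ * s ≤ 1} (Sfun τ N₁ α β ρ) := by
  have hdom : Convex ℝ {s : ℝ | 0 ≤ s ∧ ρ * s ≤ 1} :=
    (convex_Ici 0).inter (convex_halfSpace_le (LinearMap.mulLeft ℝ ρ).isLinear 1)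
  have h₁ := ((convexOn_mul_log_const_mul (α / τ)).smul (inv_nonneg.2 hτ)).subset
    (fun s hs => hs.1) hdom
  have h₂ := ((convexOn_mul_log_const_mul (β / τ)).smul (inv_nonneg.2 hN₁)).subset
    (fun s hs => hs.1) hdom
  have h₃ := (convexOn_mul_log.comp_affineMap (AffineMap.lineMap (1 : ℝ) (1 - ρ))).subset
    (fun s hs => show 0 ≤ AffineMap.lineMap (1 : ℝ) (1 - ρ) s by
      rw [AffineMap.lineMap_apply_ring']
      linarith [hs.2]) hdom
  refine ((h₁.add h₂).add h₃).congr fun s _ => ?_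
  simp only [Sfun, Pi.add_apply, Function.comp_apply, AffineMap.lineMap_apply_ring', smul_eq_mul]
  ring_nf

theorem convexOn_neg_Hfun {χ ρ : ℝ} (hχρ : 0 ≤ χ * ρ) : ConvexOn ℝ univ fun s => -Hfun χ ρ s :=
  (((Even.convexOn_pow even_two).smul hχρ).add
    ((LinearMap.mulLeft ℝ (-χ)).convexOn convex_univ)).congr fun s _ => by
      simp only [Hfun, Pi.add_apply, smul_eq_mul, LinearMap.mulLeft_apply]
      ring

theorem convexOn_sq_div : ConvexOn ℝ (univ ×ˢ Ioi 0) fun q : ℝ × ℝ => q.1 ^ 2 / q.2 := by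
  refine ⟨convex_univ.prod (convex_Ioi 0), ?_⟩
  rintro ⟨u₁, c₁⟩ ⟨-, hc₁ : 0 < c₁⟩ ⟨u₂, c₂⟩ ⟨-, hc₂ : 0 < c₂⟩ a b ha hb hab
  simp only [Prod.smul_mk, Prod.mk_add_mk, smul_eq_mul]
  obtain ⟨v₁, rfl⟩ : ∃ v, u₁ = c₁ * v := ⟨u₁ / c₁, by field_simp⟩
  obtain ⟨v₂, rfl⟩ : ∃ v, u₂ = c₂ * v := ⟨u₂ / c₂, by field_simp⟩
  have hc : 0 < a * c₁ + b * c₂ := by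
    simpa using convex_Ioi (0 : ℝ) hc₁ hc₂ ha hb hab
  rw [div_le_iff₀ hc]
  field_simp
  -- `(a c₁ + b c₂) (a c₁ v₁² + b c₂ v₂²) - (a c₁ v₁ + b c₂ v₂)² = a b c₁ c₂ (v₁ - v₂)²`
  nlinarith [mul_nonneg (mul_nonneg (mul_nonneg ha hb) (mul_nonneg hc₁.le hc₂.le)) (sq_nonneg (v₁ - v₂))]

theorem ConcaveOn.convexOn_sq_div {E : Type*} [AddCommGroup E] [Module ℝ E] {s : Set E}
    {c : E → ℝ} (hc : ConcaveOn ℝ s c) (hc₀ : ∀ x ∈ s, 0 < c x) :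
    ConvexOn ℝ (s ×ˢ univ) fun q : E × ℝ => q.2 ^ 2 / c q.1 := by
  refine ⟨hc.1.prod convex_univ, ?_⟩
  rintro ⟨x₁, u₁⟩ ⟨hx₁, -⟩ ⟨x₂, u₂⟩ ⟨hx₂, -⟩ a b ha hb hab
  simp only [Prod.smul_mk, Prod.mk_add_mk, smul_eq_mul]
  have hmix : 0 < a * c x₁ + b * c x₂ := by
    simpa using convex_Ioi (0 : ℝ) (hc₀ x₁ hx₁) (hc₀ x₂ hx₂) ha hb hab
  calc (a * u₁ + b * u₂) ^ 2 / c (a • x₁ + b • x₂)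
      ≤ (a * u₁ + b * u₂) ^ 2 / (a * c x₁ + b * c x₂) :=
        div_le_div_of_nonneg_left (sq_nonneg _) hmix (hc.2 hx₁ hx₂ ha hb hab)
    _ ≤ a * (u₁ ^ 2 / c x₁) + b * (u₂ ^ 2 / c x₂) := by
        simpa using _root_.convexOn_sq_div.2 (x := (u₁, c x₁)) (y := (u₂, c x₂))
          ⟨trivial, hc₀ x₁ hx₁⟩ ⟨trivial, hc₀ x₂ hx₂⟩ ha hb hab

theorem concaveOn_inv_one_sub_add_sq : ConcaveOn ℝ (Icc 0 1) fun x : ℝ => (1 - x + x ^ 2)⁻¹ := by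
  refine ⟨convex_Icc 0 1, ?_⟩
  rintro x ⟨hx₀, hx₁⟩ y ⟨hy₀, hy₁⟩ a b ha hb hab
  simp only [smul_eq_mul]
  set q : ℝ → ℝ := fun t => 1 - t + t ^ 2 with hq
  have hq₀ : ∀ t, 0 < q t := fun t => by nlinarith [sq_nonneg (t - 1 / 2)]
  -- `x + y - 1` lies in `[y - 1, y]` and in `[x - 1, x]`
  have hxy : (x + y - 1) ^ 2 ≤ a * q y + b * q x := by
    have hx : (x + y - 1) ^ 2 ≤ q x := by nlinarith
    have hy : (x + y - 1) ^ 2 ≤ q y := by nlinarith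
    nlinarith
  have key : q x * q y - q (a * x + b * y) * (a * q y + b * q x)
      = a * b * (x - y) ^ 2 * (a * q y + b * q x - (x + y - 1) ^ 2) := by
    simp only [hq]
    rw [show b = 1 - a by linarith]
    ring
  rw [← div_eq_mul_inv, ← div_eq_mul_inv, div_add_div _ _ (hq₀ x).ne' (hq₀ y).ne',
    div_le_iff₀ (mul_pos (hq₀ x) (hq₀ y)), inv_mul_eq_div, le_div_iff₀ (hq₀ _)]
  nlinarith [key, mul_nonneg (mul_nonneg (mul_nonneg ha hb) (sq_nonneg (x - y))) (sub_nonneg.2 hxy)]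

theorem convexOn_kap_sub_mul_sq :
    ConvexOn ℝ (Ioo 0 1 ×ˢ univ) fun q : ℝ × ℝ => (kap q.1 - 1 / 36) * q.2 ^ 2 := by
  have hc := ((concaveOn_inv_one_sub_add_sq.subset Ioo_subset_Icc_self (convex_Ioo 0 1)).smul
    (by norm_num : (0 : ℝ) ≤ 36)).add_const (-36)
  refine (hc.convexOn_sq_div fun x ⟨hx₀, hx₁⟩ => ?_).congr fun ⟨x, u⟩ ⟨⟨hx₀, hx₁⟩, _⟩ => ?_
  · have hq₁ : 1 - x + x ^ 2 < 1 := by nlinarith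
    have : 1 < (1 - x + x ^ 2)⁻¹ := one_lt_inv₀ (by nlinarith) |>.2 hq₁
    simp only [Pi.add_apply, smul_eq_mul]
    linarith
  · have hq : 1 - x + x ^ 2 ≠ 0 := by nlinarith
    have hx : x * (1 - x) ≠ 0 := mul_ne_zero hx₀.ne' (by linarith)
    have hcx : 36 * (1 - x + x ^ 2)⁻¹ + -36 = 36 * (x * (1 - x)) / (1 - x + x ^ 2) := by
      field_simp
      ring
    simp only [kap, Pi.add_apply, smul_eq_mul, hcx]
    field_simp
    ring

section Differences

variable {N : ℕ}

theorem isLinearMap_Dx (h : ℝ) (p : ZMod N × ZMod N) : IsLinearMap ℝ fun ν => Dx h ν p :=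
  ⟨fun ν μ => by simp only [Dx, Pi.add_apply]; ring,
    fun c ν => by simp only [Dx, Pi.smul_apply, smul_eq_mul]; ring⟩

theorem isLinearMap_Dy (h : ℝ) (p : ZMod N × ZMod N) : IsLinearMap ℝ fun ν => Dy h ν p :=
  ⟨fun ν μ => by simp only [Dy, Pi.add_apply]; ring,
    fun c ν => by simp only [Dy, Pi.smul_apply, smul_eq_mul]; ring⟩

variable [NeZero N]

theorem convexOn_sum_kap_sub_mul_sq_differences (h : ℝ) :
    ConvexOn ℝ {φ : ZMod N × ZMod N → ℝ | ∀ p, φ p ∈ Ioo 0 1} fun φ =>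
      ∑ p : ZMod N × ZMod N, (kap (φ p) - 1 / 36) * ((1 : ℝ) / 2) *
        ((Dx h φ p) ^ 2 + (Dx h φ (p.1 - 1, p.2)) ^ 2
          + (Dy h φ p) ^ 2 + (Dy h φ (p.1, p.2 - 1)) ^ 2) := by
  refine convexOn_finset_sum _ (fun p _ => ?_) (convex_setOf_forall_apply_mem (convex_Ioo 0 1))
  have hg := convexOn_kap_sub_mul_sq.comp_apply_prod (convex_Ioo 0 1) p
  refine ((((hg (isLinearMap_Dx h p).mk').add (hg (isLinearMap_Dx h (p.1 - 1, p.2)).mk')).add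
    (hg (isLinearMap_Dy h p).mk')).add (hg (isLinearMap_Dy h (p.1, p.2 - 1)).mk')).smul
    (by norm_num : (0 : ℝ) ≤ 1 / 2) |>.congr fun φ _ => ?_
  simp only [Pi.add_apply, IsLinearMap.mk'_apply, smul_eq_mul]
  ring

theorem convexOn_sum_sq_Dx_add_sq_Dy (h : ℝ) :
    ConvexOn ℝ univ fun φ : ZMod N × ZMod N → ℝ =>
      ∑ p : ZMod N × ZMod N, ((Dx h φ p) ^ 2 + (Dy h φ p) ^ 2) := by
  have hsq (ℓ : (ZMod N × ZMod N → ℝ) →ₗ[ℝ] ℝ) : ConvexOn ℝ univ fun φ => ℓ φ ^ 2 :=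
    (Even.convexOn_pow (𝕜 := ℝ) even_two).comp_linearMap ℓ
  exact convexOn_finset_sum _
    (fun p _ => (hsq (isLinearMap_Dx h p).mk').add (hsq (isLinearMap_Dy h p).mk')) convex_univ

end Differences

theorem discrete_energy_convex_splitting_general (N : ℕ) [NeZero N]
    (h τ N₁ α β χ ρ : ℝ) (hτ : 0 < τ) (hN₁ : 0 < N₁) (hχ : 0 < χ) (hρ : 1 < ρ) :
    ConvexOn ℝ {φ : ZMod N × ZMod N → ℝ | ∀ p, 0 < φ p ∧ φ p < 1 / ρ}
      (fun φ => h ^ 2 * ∑ p : ZMod N × ZMod N, Sfun τ N₁ α β ρ (φ p)) ∧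
    ConvexOn ℝ {φ : ZMod N × ZMod N → ℝ | ∀ p, 0 < φ p ∧ φ p < 1 / ρ}
      (fun φ => -(h ^ 2 * ∑ p : ZMod N × ZMod N, Hfun χ ρ (φ p))) ∧
    ConvexOn ℝ {φ : ZMod N × ZMod N → ℝ | ∀ p, 0 < φ p ∧ φ p < 1 / ρ}
      (fun φ => h ^ 2 * ∑ p : ZMod N × ZMod N, (kap (φ p) - 1 / 36) * ((1 : ℝ) / 2) *
        ((Dx h φ p) ^ 2 + (Dx h φ (p.1 - 1, p.2)) ^ 2
          + (Dy h φ p) ^ 2 + (Dy h φ (p.1, p.2 - 1)) ^ 2)) ∧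
    ConvexOn ℝ {φ : ZMod N × ZMod N → ℝ | ∀ p, 0 < φ p ∧ φ p < 1 / ρ}
      (fun φ => h ^ 2 / 36 * ∑ p : ZMod N × ZMod N, ((Dx h φ p) ^ 2 + (Dy h φ p) ^ 2)) := by
  have hρ₀ : 0 < ρ := by linarith
  have hΩ : Convex ℝ {φ : ZMod N × ZMod N → ℝ | ∀ p, φ p ∈ Ioo 0 (1 / ρ)} :=
    convex_setOf_forall_apply_mem (convex_Ioo 0 (1 / ρ))
  have hS : Ioo 0 (1 / ρ) ⊆ {s | 0 ≤ s ∧ ρ * s ≤ 1} := fun s ⟨hs₀, hs₁⟩ =>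
    ⟨hs₀.le, ((lt_div_iff₀' hρ₀).1 hs₁).le⟩
  have hK : {φ : ZMod N × ZMod N → ℝ | ∀ p, φ p ∈ Ioo 0 (1 / ρ)} ⊆ {φ | ∀ p, φ p ∈ Ioo 0 1} :=
    fun φ hφ p => Ioo_subset_Ioo_right ((div_lt_one hρ₀).2 hρ).le (hφ p)
  refine ⟨?_, ?_, ?_, ?_⟩
  · exact ((convexOn_Sfun hτ.le hN₁.le α β ρ).subset hS (convex_Ioo _ _)).sum_comp_apply.smul
      (sq_nonneg h)
  · refine (((convexOn_neg_Hfun (mul_pos hχ hρ₀).le).subset (subset_univ _)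
      (convex_Ioo 0 (1 / ρ))).sum_comp_apply.smul (sq_nonneg h)).congr fun φ _ => ?_
    simp only [Finset.sum_neg_distrib, smul_eq_mul, mul_neg]
  · exact ((convexOn_sum_kap_sub_mul_sq_differences h).subset hK hΩ).smul (sq_nonneg h)
  · exact ((convexOn_sum_sq_Dx_add_sq_Dy h).subset (subset_univ _) hΩ).smul (by positivity)

theorem discrete_energy_convex_splitting (N : ℕ) [NeZero N] (hN : 1 ≤ N)
    (h τ N₁ α β χ ρ : ℝ) (hh : 0 < h) (hτ : 0 < τ) (hN₁ : 0 < N₁)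
    (hα : 0 < α) (hβ : 0 < β) (hχ : 0 < χ) (hρ : 1 < ρ) :
    ConvexOn ℝ {φ : ZMod N × ZMod N → ℝ | ∀ p, 0 < φ p ∧ φ p < 1 / ρ}
      (fun φ => h ^ 2 * ∑ p : ZMod N × ZMod N, Sfun τ N₁ α β ρ (φ p)) ∧
    ConvexOn ℝ {φ : ZMod N × ZMod N → ℝ | ∀ p, 0 < φ p ∧ φ p < 1 / ρ}
      (fun φ => -(h ^ 2 * ∑ p : ZMod N × ZMod N, Hfun χ ρ (φ p))) ∧
    ConvexOn ℝ {φ : ZMod N × ZMod N → ℝ | ∀ p, 0 < φ p ∧ φ p < 1 / ρ}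
      (fun φ => h ^ 2 * ∑ p : ZMod N × ZMod N, (kap (φ p) - 1 / 36) * ((1 : ℝ) / 2) *
        ((Dx h φ p) ^ 2 + (Dx h φ (p.1 - 1, p.2)) ^ 2
          + (Dy h φ p) ^ 2 + (Dy h φ (p.1, p.2 - 1)) ^ 2)) ∧
    ConvexOn ℝ {φ : ZMod N × ZMod N → ℝ | ∀ p, 0 < φ p ∧ φ p < 1 / ρ}
      (fun φ => h ^ 2 / 36 * ∑ p : ZMod N × ZMod N, ((Dx h φ p) ^ 2 + (Dy h φ p) ^ 2)) :=
  discrete_energy_convex_splitting_general N h τ N₁ α β χ ρ hτ hN₁ hχ hρ
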